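/- (Boundedness of dual variables, Lemma 3) Consider the dual update y_i(t+1) = [(1−η_t) Σ_j a_{ij}(t) y_j(t) + η_t g_i^t(x_i(t))]_+ with doubly stochastic weights a_{ij}(t), step sizes η_t ∈ (0,1], initial conditions y_i(0) = 0, and ‖g_i^t(x)‖ ≤ κ₂ for all i, t, x. Then Σ_{i=1}^n ‖y_i(t)‖² ≤ n κ₂² for all t, and in particular ‖y_i(t)‖ ≤ √n κ₂ for each i and t. -/

import Mathlib

/-!
The squared norm is convex and the positive part `vecPos` is nonexpansive, so each updated
`‖y i‖²` is at most `(1 - η) ∑ⱼ aᵢⱼ ‖y j‖² + η ‖g i‖²`. Summing over `i`, the column sums of a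
doubly stochastic matrix give `S (t + 1) ≤ (1 - η) S t + η n κ₂²` for `S t = ∑ᵢ ‖y t i‖²`, so the
bound `S t ≤ n κ₂²` is inductive; the bound on a single `‖y t i‖` follows since it is one summand.
-/

noncomputable def vecPos {h : ℕ} (a : EuclideanSpace ℝ (Fin h)) : EuclideanSpace ℝ (Fin h) :=
  WithLp.toLp 2 (fun i => max (a i) 0)

open Finset

lemma norm_vecPos_le {h : ℕ} (a : EuclideanSpace ℝ (Fin h)) : ‖vecPos a‖ ≤ ‖a‖ := by
  rw [EuclideanSpace.norm_eq, EuclideanSpace.norm_eq]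
  gcongr with i
  simp only [vecPos, PiLp.toLp_apply, Real.norm_eq_abs]
  exact abs_max_le_max_abs_abs.trans (by simp)

section NormSq

variable {E : Type*} [NormedAddCommGroup E] [NormedSpace ℝ E]

lemma convexOn_norm_sq : ConvexOn ℝ Set.univ (fun x : E => ‖x‖ ^ 2) :=
  convexOn_univ_norm.pow (fun _ _ => norm_nonneg _) 2

lemma norm_sq_smul_add_smul_le {η : ℝ} (hη0 : 0 ≤ η) (hη1 : η ≤ 1) (x u : E) :
    ‖(1 - η) • x + η • u‖ ^ 2 ≤ (1 - η) * ‖x‖ ^ 2 + η * ‖u‖ ^ 2 :=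
  convexOn_norm_sq.2 (Set.mem_univ x) (Set.mem_univ u) (by linarith) hη0 (by ring)

lemma norm_sq_sum_smul_le {ι : Type*} {s : Finset ι} {w : ι → ℝ} (hw0 : ∀ j ∈ s, 0 ≤ w j)
    (hw1 : ∑ j ∈ s, w j = 1) (v : ι → E) :
    ‖∑ j ∈ s, w j • v j‖ ^ 2 ≤ ∑ j ∈ s, w j * ‖v j‖ ^ 2 :=
  convexOn_norm_sq.map_sum_le hw0 hw1 (fun _ _ => Set.mem_univ _)

lemma sum_norm_sq_sum_smul_le {ι : Type*} [Fintype ι] {a : Matrix ι ι ℝ}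
    (ha0 : ∀ i j, 0 ≤ a i j) (hrow : ∀ i, ∑ j, a i j = 1) (hcol : ∀ j, ∑ i, a i j = 1)
    (v : ι → E) :
    ∑ i, ‖∑ j, a i j • v j‖ ^ 2 ≤ ∑ j, ‖v j‖ ^ 2 :=
  calc ∑ i, ‖∑ j, a i j • v j‖ ^ 2
      ≤ ∑ i, ∑ j, a i j * ‖v j‖ ^ 2 :=
        sum_le_sum fun i _ => norm_sq_sum_smul_le (fun j _ => ha0 i j) (hrow i) v
    _ = ∑ j, ‖v j‖ ^ 2 := by
        rw [sum_comm]
        simp only [← sum_mul, hcol, one_mul]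

end NormSq

lemma sum_norm_sq_vecPos_update_le {ι : Type*} [Fintype ι] {h : ℕ} {a : Matrix ι ι ℝ}
    (ha0 : ∀ i j, 0 ≤ a i j) (hrow : ∀ i, ∑ j, a i j = 1) (hcol : ∀ j, ∑ i, a i j = 1)
    {η : ℝ} (hη0 : 0 ≤ η) (hη1 : η ≤ 1) (v u : ι → EuclideanSpace ℝ (Fin h)) :
    ∑ i, ‖vecPos ((1 - η) • (∑ j, a i j • v j) + η • u i)‖ ^ 2 ≤
      (1 - η) * ∑ j, ‖v j‖ ^ 2 + η * ∑ i, ‖u i‖ ^ 2 :=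
  calc ∑ i, ‖vecPos ((1 - η) • (∑ j, a i j • v j) + η • u i)‖ ^ 2
      ≤ ∑ i, ((1 - η) * ‖∑ j, a i j • v j‖ ^ 2 + η * ‖u i‖ ^ 2) := by
        gcongr with i
        exact (pow_le_pow_left₀ (norm_nonneg _) (norm_vecPos_le _) 2).trans
          (norm_sq_smul_add_smul_le hη0 hη1 _ _)
    _ ≤ (1 - η) * ∑ j, ‖v j‖ ^ 2 + η * ∑ i, ‖u i‖ ^ 2 := by
        rw [sum_add_distrib, ← mul_sum, ← mul_sum]
        have h1η : 0 ≤ 1 - η := by linarith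
        gcongr (1 - η) * ?_ + _
        exact sum_norm_sq_sum_smul_le ha0 hrow hcol v

theorem dual_variables_bounded_general {n h : ℕ}
    (A : ℕ → Matrix (Fin n) (Fin n) ℝ)
    (hA0 : ∀ t i j, 0 ≤ A t i j)
    (hArow : ∀ t i, ∑ j, A t i j = 1) (hAcol : ∀ t j, ∑ i, A t i j = 1)
    (η : ℕ → ℝ) (hη : ∀ t, 0 < η t ∧ η t ≤ 1)
    (g : ℕ → Fin n → EuclideanSpace ℝ (Fin h))
    (κ₂ : ℝ)
    (hg : ∀ t i, ‖g t i‖ ≤ κ₂)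
    (y : ℕ → Fin n → EuclideanSpace ℝ (Fin h))
    (hy0 : ∀ i, y 0 i = 0)
    (hrec : ∀ t i, y (t + 1) i = vecPos ((1 - η t) • (∑ j, A t i j • y t j) + η t • g t i)) :
    ∀ t, (∑ i, ‖y t i‖ ^ 2 ≤ n * κ₂ ^ 2) ∧ ∀ i, ‖y t i‖ ≤ Real.sqrt n * κ₂ := by
  have hsum : ∀ t, ∑ i, ‖y t i‖ ^ 2 ≤ n * κ₂ ^ 2 := by
    intro t
    induction t with
    | zero => simp only [hy0, norm_zero, zero_pow two_ne_zero, sum_const_zero]; positivity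
    | succ t ih =>
      obtain ⟨hη0, hη1⟩ := hη t
      have hg_sum : ∑ i, ‖g t i‖ ^ 2 ≤ n * κ₂ ^ 2 :=
        calc ∑ i, ‖g t i‖ ^ 2 ≤ ∑ _i : Fin n, κ₂ ^ 2 :=
              sum_le_sum fun i _ => pow_le_pow_left₀ (norm_nonneg _) (hg t i) 2
          _ = n * κ₂ ^ 2 := by simp
      calc ∑ i, ‖y (t + 1) i‖ ^ 2
          ≤ (1 - η t) * ∑ j, ‖y t j‖ ^ 2 + η t * ∑ i, ‖g t i‖ ^ 2 := by
            simpa only [hrec] using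
              sum_norm_sq_vecPos_update_le (hA0 t) (hArow t) (hAcol t) hη0.le hη1 (y t) (g t)
        _ ≤ (1 - η t) * (n * κ₂ ^ 2) + η t * (n * κ₂ ^ 2) := by
            gcongr
        _ = n * κ₂ ^ 2 := by ring
  intro t
  refine ⟨hsum t, fun i => ?_⟩
  have hκ₂ : 0 ≤ κ₂ := (norm_nonneg _).trans (hg t i)
  have hsq : ‖y t i‖ ^ 2 ≤ (Real.sqrt n * κ₂) ^ 2 := by
    rw [mul_pow, Real.sq_sqrt n.cast_nonneg]
    exact (single_le_sum (fun j _ => sq_nonneg ‖y t j‖) (mem_univ i)).trans (hsum t)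
  exact (pow_le_pow_iff_left₀ (norm_nonneg _) (by positivity) two_ne_zero).1 hsq

theorem dual_variables_bounded {n h : ℕ}
    (A : ℕ → Matrix (Fin n) (Fin n) ℝ)
    (hA0 : ∀ t i j, 0 ≤ A t i j)
    (hArow : ∀ t i, ∑ j, A t i j = 1) (hAcol : ∀ t j, ∑ i, A t i j = 1)
    (η : ℕ → ℝ) (hη : ∀ t, 0 < η t ∧ η t ≤ 1)
    (g : ℕ → Fin n → EuclideanSpace ℝ (Fin h))
    (κ₂ : ℝ) (hκ₂ : 0 < κ₂)
    (hg : ∀ t i, ‖g t i‖ ≤ κ₂)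
    (y : ℕ → Fin n → EuclideanSpace ℝ (Fin h))
    (hy0 : ∀ i, y 0 i = 0)
    (hrec : ∀ t i, y (t + 1) i = vecPos ((1 - η t) • (∑ j, A t i j • y t j) + η t • g t i)) :
    ∀ t, (∑ i, ‖y t i‖ ^ 2 ≤ n * κ₂ ^ 2) ∧ ∀ i, ‖y t i‖ ≤ Real.sqrt n * κ₂ :=
  dual_variables_bounded_general A hA0 hArow hAcol η hη g κ₂ hg y hy0 hrec
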